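/- Let d = 1 and let μ : ℝ → ℝ satisfy 0 ≤ μ ≤ 1 with μ supported in (0,1). Define ν := χ_{(0,a)} + χ_{(b,1)}, where 0 ≤ a ≤ b ≤ 1 are chosen so that ∫₀¹ μ(x) dx = ∫₀¹ ν(x) dx and ∫₀¹ x μ(x) dx = ∫₀¹ x ν(x) dx. Then μ ≤_SH ν with respect to (0,1); that is, the function v(x) := ∫₀^x ∫₀^y (ν(s) − μ(s)) ds dy satisfies v ≥ 0 on (0,1) and v ≡ 0 outside (0,1), and ∫φ dμ ≤ ∫φ dν for every convex φ ∈ L¹((0,1)). Moreover, v is nondecreasing on (0,a) and nonincreasing on (b,1). -/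

import Mathlib

open MeasureTheory Set intervalIntegral

noncomputable section


lemma convex_right_deriv (φ : ℝ → ℝ) (hφ : ConvexOn ℝ (Ioo (0:ℝ) 1) φ) :
    ∃ g : ℝ → ℝ, MonotoneOn g (Ioo (0:ℝ) 1) ∧
      (∀ x ∈ Ioo (0:ℝ) 1, HasDerivWithinAt φ (g x) (Ioi x) x) ∧
      (∀ x ∈ Ioo (0:ℝ) 1, ∀ y ∈ Ioo (0:ℝ) 1, x < y →
        g x ≤ (φ y - φ x) / (y - x) ∧ (φ y - φ x) / (y - x) ≤ g y) := by
  set g : ℝ → ℝ := fun x => sInf (slope φ x '' Ioo x 1) with hg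
  have hmem : ∀ {u x : ℝ}, u ∈ Ioo (0:ℝ) 1 → u ≠ x → u ∈ Ioo (0:ℝ) 1 \ {x} :=
    fun hu hne => ⟨hu, hne⟩
  have hslope : ∀ x y : ℝ, slope φ x y = (φ y - φ x) / (y - x) := by
    intro x y; rw [slope_def_field]
  have hbdd : ∀ x ∈ Ioo (0:ℝ) 1, BddBelow (slope φ x '' Ioo x 1) := by
    intro x hx
    refine ⟨slope φ x (x/2), ?_⟩
    rintro z ⟨y, hy, rfl⟩
    have h2 : x/2 ∈ Ioo (0:ℝ) 1 := ⟨by linarith [hx.1], by linarith [hx.1, hx.2]⟩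
    exact hφ.slope_mono hx (hmem h2 (ne_of_lt (by linarith [hx.1] : x/2 < x)))
      (hmem ⟨lt_trans hx.1 hy.1, hy.2⟩ (ne_of_gt hy.1)) (by linarith [hx.1, hy.1])
  have hle_slope : ∀ x ∈ Ioo (0:ℝ) 1, ∀ y ∈ Ioo (0:ℝ) 1, x < y → g x ≤ slope φ x y := by
    intro x hx y hy hxy
    exact csInf_le (hbdd x hx) (mem_image_of_mem _ ⟨hxy, hy.2⟩)
  have hslope_le : ∀ x ∈ Ioo (0:ℝ) 1, ∀ y ∈ Ioo (0:ℝ) 1, x < y → slope φ x y ≤ g y := by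
    intro x hx y hy hxy
    refine le_csInf ((nonempty_Ioo.2 hy.2).image _) ?_
    rintro z ⟨w, hw, rfl⟩
    have h1 : slope φ y x ≤ slope φ y w := hφ.slope_mono hy
      (hmem hx (ne_of_lt hxy)) (hmem ⟨lt_trans hy.1 hw.1, hw.2⟩ (ne_of_gt hw.1))
      (by linarith [hw.1])
    rwa [slope_comm] at h1
  have hmono : MonotoneOn g (Ioo (0:ℝ) 1) := by
    intro x hx y hy hxy
    rcases eq_or_lt_of_le hxy with rfl | h
    · exact le_refl _
    · exact (hle_slope x hx y hy h).trans (hslope_le x hx y hy h)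
  refine ⟨g, hmono, ?_, ?_⟩
  · intro x hx
    have hmono' : MonotoneOn (slope φ x) (Ioo x 1) := by
      intro u hu v hv huv
      exact hφ.slope_mono hx (hmem ⟨lt_trans hx.1 hu.1, hu.2⟩ (ne_of_gt hu.1))
        (hmem ⟨lt_trans hx.1 hv.1, hv.2⟩ (ne_of_gt hv.1)) huv
    have htendsto : Filter.Tendsto (slope φ x) (nhdsWithin x (Ioi x)) (nhds (g x)) :=
      MonotoneOn.tendsto_nhdsWithin_Ioo_right (nonempty_Ioo.2 hx.2) hmono' (hbdd x hx)
    rw [hasDerivWithinAt_iff_tendsto_slope]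
    have heq : Ioi x \ {x} = Ioi x := by simp
    rw [heq]
    exact htendsto
  · intro x hx y hy hxy
    exact ⟨by rw [← hslope x y]; exact hle_slope x hx y hy hxy,
      by rw [← hslope x y]; exact hslope_le x hx y hy hxy⟩

lemma convex_ftc (φ g : ℝ → ℝ) (hφc : ContinuousOn φ (Ioo (0:ℝ) 1))
    (hd : ∀ x ∈ Ioo (0:ℝ) 1, HasDerivWithinAt φ (g x) (Ioi x) x)
    (hmono : MonotoneOn g (Ioo (0:ℝ) 1)) :
    ∀ x ∈ Ioo (0:ℝ) 1, φ x = φ (1/2) + ∫ t in (1/2:ℝ)..x, g t := by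
  have key : ∀ u w : ℝ, u ∈ Ioo (0:ℝ) 1 → w ∈ Ioo (0:ℝ) 1 → u ≤ w →
      ∫ t in u..w, g t = φ w - φ u := by
    intro u w hu hw huw
    have hsub : Icc u w ⊆ Ioo (0:ℝ) 1 := fun t ht => ⟨lt_of_lt_of_le hu.1 ht.1, lt_of_le_of_lt ht.2 hw.2⟩
    refine integral_eq_sub_of_hasDeriv_right_of_le huw (hφc.mono hsub)
      (fun t ht => hd t (hsub ⟨le_of_lt ht.1, le_of_lt ht.2⟩)) ?_
    refine MonotoneOn.intervalIntegrable (hmono.mono ?_)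
    rw [uIcc_of_le huw]; exact hsub
  intro x hx
  have h2 : (1/2 : ℝ) ∈ Ioo (0:ℝ) 1 := by norm_num
  rcases le_total (1/2 : ℝ) x with h | h
  · rw [key (1/2) x h2 hx h]; ring
  · rw [intervalIntegral.integral_symm, key x (1/2) hx h2 h]; ring


set_option maxHeartbeats 2000000 in
lemma convex_part (f : ℝ → ℝ) (hfm : Measurable f) (hfb : ∀ x, |f x| ≤ 1)
    (hfsupp : ∀ x, x ∉ Ioo (0:ℝ) 1 → f x = 0)
    (c : ℝ)
    (hFpos : ∀ t, t < c → 0 ≤ ∫ s in (0:ℝ)..t, f s)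
    (hFneg : ∀ t, c ≤ t → (∫ s in (0:ℝ)..t, f s) ≤ 0)
    (hF1 : (∫ s in (0:ℝ)..1, f s) = 0)
    (hvF : (∫ t in Ioo (0:ℝ) 1, ∫ s in (0:ℝ)..t, f s) = 0)
    (φ : ℝ → ℝ) (hφint : IntegrableOn φ (Ioo (0:ℝ) 1))
    (hφconv : ConvexOn ℝ (Ioo (0:ℝ) 1) φ) :
    0 ≤ ∫ x in Ioo (0:ℝ) 1, φ x * f x := by
  -- basic integrability of f
  have hfint : Integrable f volume := by
    have hind : Integrable ((Ioo (0:ℝ) 1).indicator (fun _ => (1:ℝ))) volume :=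
      (integrable_indicator_iff measurableSet_Ioo).2
        ((integrableOn_const_iff (C := (1:ℝ))).2 (Or.inr measure_Ioo_lt_top))
    refine Integrable.mono' hind hfm.aestronglyMeasurable
      (Filter.Eventually.of_forall fun x => ?_)
    · by_cases hx : x ∈ Ioo (0:ℝ) 1
      · rw [indicator_of_mem hx]; simpa using hfb x
      · rw [indicator_of_notMem hx, hfsupp x hx]; simp
  set F : ℝ → ℝ := fun t => ∫ s in (0:ℝ)..t, f s with hFdef
  have hFcont : Continuous F :=
    intervalIntegral.continuous_primitive (fun _ _ => hfint.intervalIntegrable) 0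
  have hFb1 : ∀ t, 0 ≤ t → |F t| ≤ t := by
    intro t ht
    have := intervalIntegral.norm_integral_le_of_norm_le_const
      (a := (0:ℝ)) (b := t) (C := 1) (f := f) (fun x _ => by simpa using hfb x)
    rw [Real.norm_eq_abs] at this
    calc |F t| ≤ 1 * |t - 0| := this
    _ = t := by rw [abs_of_nonneg (by linarith : (0:ℝ) ≤ t - 0)]; ring
  have hFb2 : ∀ t, t ≤ 1 → |F t| ≤ 1 - t := by
    intro t ht
    have hsub : F t - F 1 = ∫ s in (1:ℝ)..t, f s :=
      (intervalIntegral.integral_interval_sub_left hfint.intervalIntegrable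
        hfint.intervalIntegrable)
    have := intervalIntegral.norm_integral_le_of_norm_le_const
      (a := (1:ℝ)) (b := t) (C := 1) (f := f) (fun x _ => by simpa using hfb x)
    rw [Real.norm_eq_abs, ← hsub] at this
    have ht' : |t - 1| = 1 - t := by rw [abs_of_nonpos (by linarith)]; ring
    have hF1' : F 1 = 0 := hF1
    calc |F t| = |F t - F 1| := by rw [hF1', sub_zero]
    _ ≤ 1 * |t - 1| := this
    _ = 1 - t := by rw [ht']; ring
  -- right derivative
  have hφcont : ContinuousOn φ (Ioo (0:ℝ) 1) := hφconv.continuousOn isOpen_Ioo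
  obtain ⟨g, hgmono, hgderiv, hgslope⟩ := convex_right_deriv φ hφconv
  have hrepr : ∀ x ∈ Ioo (0:ℝ) 1, φ x = φ (1/2) + ∫ t in (1/2:ℝ)..x, g t :=
    convex_ftc φ g hφcont hgderiv hgmono
  have h2 : (1/2 : ℝ) ∈ Ioo (0:ℝ) 1 := by norm_num
  set M : Measure ℝ := volume.restrict (Ioo (0:ℝ) 1) with hM
  -- dominating function
  set Φ : ℝ → ℝ := (Ioo (0:ℝ) 1).indicator φ with hΦdef
  have hΦint : Integrable Φ volume := (integrable_indicator_iff measurableSet_Ioo).2 hφint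
  set D : ℝ → ℝ := fun t => |g (1/2)| + 2*|Φ t| + 2*|Φ (2⁻¹*t)| + 2*|Φ (2⁻¹*t + 2⁻¹)| with hDdef
  have hDint : Integrable D M := by
    have h1 : Integrable (fun t => Φ (2⁻¹*t)) volume :=
      hΦint.comp_mul_left' (by norm_num)
    have h2 : Integrable (fun t => Φ (2⁻¹*t + 2⁻¹)) volume := by
      have := ((measurePreserving_add_right volume (1:ℝ)).integrable_comp
        h1.aestronglyMeasurable).2 h1
      have heq : ((fun t => Φ (2⁻¹*t)) ∘ (· + (1:ℝ))) = fun t => Φ (2⁻¹*t + 2⁻¹) := by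
        funext t; simp [Function.comp]; ring_nf
      rwa [heq] at this
    have hconst : Integrable (fun _ : ℝ => |g (1/2)|) M :=
      (integrableOn_const_iff).2 (Or.inr measure_Ioo_lt_top)
    exact ((hconst.add ((hΦint.norm.const_mul 2).restrict)).add
      ((h1.norm.const_mul 2).restrict)).add ((h2.norm.const_mul 2).restrict)
  have hDom1 : ∀ t ∈ Ioo (0:ℝ) 1, t ≤ 1/2 → |g t| * t ≤ D t := by
    intro t ht hle
    have htm : 2⁻¹*t ∈ Ioo (0:ℝ) 1 := ⟨by linarith [ht.1], by linarith [ht.2]⟩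
    have hAB := hgslope (2⁻¹*t) htm t ht (by linarith [ht.1])
    have hB : φ t - φ (2⁻¹*t) ≤ g t * (t - 2⁻¹*t) := by
      have hpos : (0:ℝ) < t - 2⁻¹*t := by linarith [ht.1]
      exact (div_le_iff₀ hpos).1 hAB.2
    have hA : g t ≤ g (1/2) := hgmono ht h2 hle
    have hΦt : Φ t = φ t := indicator_of_mem ht φ
    have hΦtm : Φ (2⁻¹*t) = φ (2⁻¹*t) := indicator_of_mem htm φ
    have hexp : g t * t = 2 * (g t * (t - 2⁻¹*t)) := by ring
    simp only [hDdef]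
    rw [hΦt, hΦtm]
    rcases abs_cases (g t) with ⟨he, _⟩ | ⟨he, _⟩ <;> rw [he]
    · nlinarith [le_abs_self (g (1/2:ℝ)), abs_nonneg (φ t), abs_nonneg (φ (2⁻¹*t)),
        abs_nonneg (Φ (2⁻¹*t + 2⁻¹)), ht.1, ht.2, abs_nonneg (g (1/2:ℝ))]
    · nlinarith [le_abs_self (φ (2⁻¹*t)), neg_abs_le (φ t), abs_nonneg (Φ (2⁻¹*t + 2⁻¹)),
        abs_nonneg (g (1/2:ℝ)), ht.1, ht.2]
  have hDom2 : ∀ t ∈ Ioo (0:ℝ) 1, 1/2 ≤ t → |g t| * (1-t) ≤ D t := by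
    intro t ht hle
    have htp : 2⁻¹*t + 2⁻¹ ∈ Ioo (0:ℝ) 1 := ⟨by linarith [ht.1], by linarith [ht.2]⟩
    have hAB := hgslope t ht (2⁻¹*t + 2⁻¹) htp (by linarith [ht.2])
    have hB : g t * (2⁻¹*t + 2⁻¹ - t) ≤ φ (2⁻¹*t + 2⁻¹) - φ t := by
      have hpos : (0:ℝ) < 2⁻¹*t + 2⁻¹ - t := by linarith [ht.2]
      exact (le_div_iff₀ hpos).1 hAB.1
    have hA : g (1/2) ≤ g t := hgmono h2 ht hle
    have hΦt : Φ t = φ t := indicator_of_mem ht φ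
    have hΦtp : Φ (2⁻¹*t + 2⁻¹) = φ (2⁻¹*t + 2⁻¹) := indicator_of_mem htp φ
    have hexp : g t * (1 - t) = 2 * (g t * (2⁻¹*t + 2⁻¹ - t)) := by ring
    simp only [hDdef]
    rw [hΦt, hΦtp]
    rcases abs_cases (g t) with ⟨he, _⟩ | ⟨he, _⟩ <;> rw [he]
    · nlinarith [le_abs_self (φ (2⁻¹*t + 2⁻¹)), neg_abs_le (φ t), abs_nonneg (Φ (2⁻¹*t)),
        abs_nonneg (g (1/2:ℝ)), ht.1, ht.2]
    · nlinarith [neg_abs_le (g (1/2:ℝ)), abs_nonneg (φ t), abs_nonneg (φ (2⁻¹*t + 2⁻¹)),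
        abs_nonneg (Φ (2⁻¹*t)), ht.1, ht.2, abs_nonneg (g (1/2:ℝ))]
  have hgaem : AEMeasurable g M := aemeasurable_restrict_of_monotoneOn measurableSet_Ioo hgmono
  have hgFint : Integrable (fun t => g t * F t) M := by
    refine Integrable.mono' hDint
      ((hgaem.mul hFcont.measurable.aemeasurable).aestronglyMeasurable) ?_
    filter_upwards [ae_restrict_mem measurableSet_Ioo] with t ht
    rw [Real.norm_eq_abs, abs_mul]
    rcases le_total t (1/2 : ℝ) with hle | hle
    · calc |g t| * |F t| ≤ |g t| * t :=
        mul_le_mul_of_nonneg_left (hFb1 t ht.1.le) (abs_nonneg _)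
      _ ≤ D t := hDom1 t ht hle
    · calc |g t| * |F t| ≤ |g t| * (1 - t) :=
        mul_le_mul_of_nonneg_left (hFb2 t ht.2.le) (abs_nonneg _)
      _ ≤ D t := hDom2 t ht hle
  have hFMint : Integrable F M := by
    refine Integrable.mono' ((integrableOn_const_iff (C := (1:ℝ))).2 (Or.inr measure_Ioo_lt_top))
      hFcont.aestronglyMeasurable ?_
    filter_upwards [ae_restrict_mem measurableSet_Ioo] with t ht
    rw [Real.norm_eq_abs]
    calc |F t| ≤ t := hFb1 t ht.1.le
    _ ≤ 1 := ht.2.le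
  -- the Fubini step
  have hswap : ∫ x, (∫ t in (1/2:ℝ)..x, g t) * f x ∂M = -∫ t, g t * F t ∂M := by
    set k : ℝ → ℝ → ℝ := fun x t =>
      if 1/2 < t ∧ t ≤ x then 1 else if x < t ∧ t ≤ 1/2 then -1 else 0 with hk
    have hkb : ∀ x t, |k x t| ≤ 1 := by
      intro x t; simp only [hk]; split_ifs <;> norm_num
    have hkmeas : Measurable (fun p : ℝ × ℝ => k p.1 p.2) := by
      have hs1 : MeasurableSet {p : ℝ × ℝ | 1/2 < p.2 ∧ p.2 ≤ p.1} := by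
        exact (measurable_snd measurableSet_Ioi).inter (measurableSet_le measurable_snd measurable_fst)
      have hs2 : MeasurableSet {p : ℝ × ℝ | p.1 < p.2 ∧ p.2 ≤ 1/2} := by
        exact (measurableSet_lt measurable_fst measurable_snd).inter (measurable_snd measurableSet_Iic)
      exact Measurable.ite hs1 measurable_const (Measurable.ite hs2 measurable_const measurable_const)
    -- B1
    have hB1 : ∀ x ∈ Ioo (0:ℝ) 1, (∫ t in (1/2:ℝ)..x, g t) = ∫ t, g t * k x t ∂M := by
      intro x hx
      rcases le_or_gt (1/2:ℝ) x with hx2 | hx2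
      · have hsub : Ioc (1/2:ℝ) x ⊆ Ioo (0:ℝ) 1 :=
          fun z hz => ⟨by linarith [hz.1], lt_of_le_of_lt hz.2 hx.2⟩
        have hpt : ∀ t, g t * k x t = (Ioc (1/2:ℝ) x).indicator g t := by
          intro t
          by_cases h1 : t ∈ Ioc (1/2:ℝ) x
          · rw [indicator_of_mem h1]; simp only [hk]
            rw [if_pos ⟨h1.1, h1.2⟩]; ring
          · rw [indicator_of_notMem h1]; simp only [hk]
            rw [if_neg (fun hcon => h1 ⟨hcon.1, hcon.2⟩), if_neg]
            · ring
            · rintro ⟨ha', hb'⟩; exact absurd (lt_of_le_of_lt (hb'.trans hx2) ha') (lt_irrefl t)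
        have hind : ∫ t, (Ioc (1/2:ℝ) x).indicator g t ∂M = ∫ t in Ioc (1/2:ℝ) x, g t := by
          rw [MeasureTheory.integral_indicator measurableSet_Ioc, hM,
            Measure.restrict_restrict measurableSet_Ioc, inter_eq_self_of_subset_left hsub]
        calc (∫ t in (1/2:ℝ)..x, g t) = ∫ t in Ioc (1/2:ℝ) x, g t :=
              intervalIntegral.integral_of_le hx2
        _ = ∫ t, (Ioc (1/2:ℝ) x).indicator g t ∂M := hind.symm
        _ = ∫ t, g t * k x t ∂M :=
              integral_congr_ae (Filter.Eventually.of_forall fun t => (hpt t).symm)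
      · have hsub : Ioc x (1/2:ℝ) ⊆ Ioo (0:ℝ) 1 :=
          fun z hz => ⟨lt_trans hx.1 hz.1, by linarith [hz.2]⟩
        have hpt : ∀ t, g t * k x t = -((Ioc x (1/2:ℝ)).indicator g t) := by
          intro t
          by_cases h1 : t ∈ Ioc x (1/2:ℝ)
          · rw [indicator_of_mem h1]; simp only [hk]
            rw [if_neg (by rintro ⟨ha', hb'⟩; linarith [h1.1, h1.2]), if_pos ⟨h1.1, h1.2⟩]
            ring
          · rw [indicator_of_notMem h1]; simp only [hk]
            rw [if_neg (by rintro ⟨ha', hb'⟩; linarith), if_neg (fun hcon => h1 ⟨hcon.1, hcon.2⟩)]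
            ring
        have hind : ∫ t, (Ioc x (1/2:ℝ)).indicator g t ∂M = ∫ t in Ioc x (1/2:ℝ), g t := by
          rw [MeasureTheory.integral_indicator measurableSet_Ioc, hM,
            Measure.restrict_restrict measurableSet_Ioc, inter_eq_self_of_subset_left hsub]
        calc (∫ t in (1/2:ℝ)..x, g t) = -∫ t in x..(1/2:ℝ), g t :=
              (intervalIntegral.integral_symm _ _)
        _ = -∫ t in Ioc x (1/2:ℝ), g t := by rw [intervalIntegral.integral_of_le hx2.le]
        _ = -∫ t, (Ioc x (1/2:ℝ)).indicator g t ∂M := by rw [hind]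
        _ = ∫ t, g t * k x t ∂M := by
              rw [← MeasureTheory.integral_neg]
              exact integral_congr_ae (Filter.Eventually.of_forall fun t => (hpt t).symm)
    -- B3
    have hB3 : ∀ t ∈ Ioo (0:ℝ) 1, ∫ x, f x * k x t ∂M = -F t := by
      intro t ht
      rcases le_or_gt t (1/2:ℝ) with ht2 | ht2
      · have hpt : ∀ x, f x * k x t = -((Iio t).indicator f x) := by
          intro x
          by_cases hx : x < t
          · rw [indicator_of_mem (show x ∈ Iio t from hx)]; simp only [hk]
            rw [if_neg, if_pos ⟨hx, ht2⟩]
            · ring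
            · rintro ⟨ha', _⟩; linarith
          · rw [indicator_of_notMem (show x ∉ Iio t from hx)]; simp only [hk]
            rw [if_neg, if_neg]
            · ring
            · rintro ⟨ha', _⟩; exact hx ha'
            · rintro ⟨ha', _⟩; linarith
        have hset : Iio t ∩ Ioo (0:ℝ) 1 = Ioo 0 t := by
          ext z; constructor
          · rintro ⟨h1, h2, _⟩; exact ⟨h2, h1⟩
          · rintro ⟨h1, h2⟩; exact ⟨h2, h1, lt_of_lt_of_le h2 (by linarith)⟩
        have : ∫ x, (Iio t).indicator f x ∂M = F t := by
          rw [MeasureTheory.integral_indicator measurableSet_Iio, hM,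
            Measure.restrict_restrict measurableSet_Iio, hset,
            ← MeasureTheory.integral_Ioc_eq_integral_Ioo,
            ← intervalIntegral.integral_of_le ht.1.le]
        calc ∫ x, f x * k x t ∂M = ∫ x, -((Iio t).indicator f x) ∂M :=
              integral_congr_ae (Filter.Eventually.of_forall fun x => hpt x)
        _ = -∫ x, (Iio t).indicator f x ∂M := MeasureTheory.integral_neg _
        _ = -F t := by rw [this]
      · have hpt : ∀ x, f x * k x t = (Ici t).indicator f x := by
          intro x
          by_cases hx : t ≤ x
          · rw [indicator_of_mem (show x ∈ Ici t from hx)]; simp only [hk]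
            rw [if_pos ⟨ht2, hx⟩]; ring
          · rw [indicator_of_notMem (show x ∉ Ici t from hx)]; simp only [hk]
            rw [if_neg, if_neg]
            · ring
            · rintro ⟨_, hb'⟩; linarith
            · rintro ⟨_, hb'⟩; exact hx hb'
        have hset : Ici t ∩ Ioo (0:ℝ) 1 = Ico t 1 := by
          ext z; constructor
          · rintro ⟨h1, _, h3⟩; exact ⟨h1, h3⟩
          · rintro ⟨h1, h2⟩; exact ⟨h1, by linarith, h2⟩
        have hio : ∫ x in Ico t 1, f x = -F t := by
          have hsub2 : F 1 - F t = ∫ s in t..(1:ℝ), f s :=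
            intervalIntegral.integral_interval_sub_left hfint.intervalIntegrable
              hfint.intervalIntegrable
          rw [MeasureTheory.integral_Ico_eq_integral_Ioo,
            ← MeasureTheory.integral_Ioc_eq_integral_Ioo,
            ← intervalIntegral.integral_of_le ht.2.le, ← hsub2]
          have hF1' : F 1 = 0 := hF1
          rw [hF1']; ring
        calc ∫ x, f x * k x t ∂M = ∫ x, (Ici t).indicator f x ∂M :=
              integral_congr_ae (Filter.Eventually.of_forall fun x => hpt x)
        _ = ∫ x in Ico t 1, f x := by
              rw [MeasureTheory.integral_indicator measurableSet_Ici, hM,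
                Measure.restrict_restrict measurableSet_Ici, hset]
        _ = -F t := hio
    -- measurability of the product integrand
    have hgsnd : AEMeasurable (fun p : ℝ × ℝ => g p.2) (M.prod M) :=
      hgaem.comp_quasiMeasurePreserving Measure.quasiMeasurePreserving_snd
    have hPaesm : AEStronglyMeasurable (Function.uncurry fun x t => f x * (g t * k x t))
        (M.prod M) := by
      have : Function.uncurry (fun x t => f x * (g t * k x t)) =
          fun p : ℝ × ℝ => f p.1 * (g p.2 * k p.1 p.2) := rfl
      rw [this]
      exact ((hfm.comp measurable_fst).aemeasurable.mul
        (hgsnd.mul hkmeas.aemeasurable)).aestronglyMeasurable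
    -- sections are integrable
    have hsection : ∀ t ∈ Ioo (0:ℝ) 1, Integrable (fun x => f x * (g t * k x t)) M := by
      intro t ht
      have hkm : Measurable (fun x => k x t) :=
        hkmeas.comp (measurable_id.prodMk measurable_const)
      refine Integrable.mono' ((integrableOn_const_iff (C := |g t|)).2 (Or.inr measure_Ioo_lt_top))
        ((hfm.mul (measurable_const.mul hkm)).aestronglyMeasurable)
        (Filter.Eventually.of_forall fun x => ?_)
      rw [Real.norm_eq_abs, abs_mul, abs_mul]
      calc |f x| * (|g t| * |k x t|) ≤ 1 * (|g t| * 1) := by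
            apply mul_le_mul (hfb x) _ _ zero_le_one
            · exact mul_le_mul_of_nonneg_left (hkb x t) (abs_nonneg _)
            · positivity
      _ = |g t| := by ring
    -- norm-integral function is dominated by D
    have hnormbound : ∀ t ∈ Ioo (0:ℝ) 1,
        (∫ x, ‖f x * (g t * k x t)‖ ∂M) ≤ D t := by
      intro t ht
      rcases le_or_gt t (1/2:ℝ) with ht2 | ht2
      · have hptb : ∀ x, ‖f x * (g t * k x t)‖ ≤ |g t| * (Iio t).indicator (fun _ => 1) x := by
          intro x
          by_cases hx : x < t
          · rw [indicator_of_mem (show x ∈ Iio t from hx), Real.norm_eq_abs, abs_mul, abs_mul, mul_one]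
            calc |f x| * (|g t| * |k x t|) ≤ 1 * (|g t| * 1) := by
                  apply mul_le_mul (hfb x) _ _ zero_le_one
                  · exact mul_le_mul_of_nonneg_left (hkb x t) (abs_nonneg _)
                  · positivity
            _ = |g t| := by ring
          · rw [indicator_of_notMem (show x ∉ Iio t from hx)]
            have hk0 : k x t = 0 := by
              simp only [hk]; rw [if_neg, if_neg]
              · rintro ⟨ha', _⟩; exact hx ha'
              · rintro ⟨ha', _⟩; linarith
            rw [hk0]; simp
        have hmeasI : volume (Iio t ∩ Ioo (0:ℝ) 1) = ENNReal.ofReal t := by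
          have : Iio t ∩ Ioo (0:ℝ) 1 = Ioo 0 t := by
            ext z; constructor
            · rintro ⟨h1, h2, _⟩; exact ⟨h2, h1⟩
            · rintro ⟨h1, h2⟩; exact ⟨h2, h1, lt_of_lt_of_le h2 (by linarith)⟩
          rw [this, Real.volume_Ioo, sub_zero]
        have hbound := integral_mono_of_nonneg
          (Filter.Eventually.of_forall fun x => norm_nonneg (f x * (g t * k x t)))
          ((((integrableOn_const_iff (C := (1:ℝ))).2 (Or.inr measure_Ioo_lt_top)).indicator
            measurableSet_Iio).const_mul |g t| : Integrable
              (fun x => |g t| * (Iio t).indicator (fun _ => (1:ℝ)) x) M)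
          (Filter.Eventually.of_forall hptb)
        refine le_trans hbound ?_
        rw [MeasureTheory.integral_const_mul, MeasureTheory.integral_indicator measurableSet_Iio]
        rw [Measure.restrict_restrict measurableSet_Iio]
        rw [MeasureTheory.setIntegral_const, measureReal_def, hmeasI]
        rw [smul_eq_mul, mul_one, ENNReal.toReal_ofReal ht.1.le]
        exact hDom1 t ht ht2
      · have hptb : ∀ x, ‖f x * (g t * k x t)‖ ≤ |g t| * (Ici t).indicator (fun _ => 1) x := by
          intro x
          by_cases hx : t ≤ x
          · rw [indicator_of_mem (show x ∈ Ici t from hx), Real.norm_eq_abs, abs_mul, abs_mul, mul_one]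
            calc |f x| * (|g t| * |k x t|) ≤ 1 * (|g t| * 1) := by
                  apply mul_le_mul (hfb x) _ _ zero_le_one
                  · exact mul_le_mul_of_nonneg_left (hkb x t) (abs_nonneg _)
                  · positivity
            _ = |g t| := by ring
          · rw [indicator_of_notMem (show x ∉ Ici t from hx)]
            have hk0 : k x t = 0 := by
              simp only [hk]; rw [if_neg, if_neg]
              · rintro ⟨_, hb'⟩; linarith
              · rintro ⟨_, hb'⟩; exact hx hb'
            rw [hk0]; simp
        have hmeasI : volume (Ici t ∩ Ioo (0:ℝ) 1) = ENNReal.ofReal (1 - t) := by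
          have : Ici t ∩ Ioo (0:ℝ) 1 = Ico t 1 := by
            ext z; constructor
            · rintro ⟨h1, _, h3⟩; exact ⟨h1, h3⟩
            · rintro ⟨h1, h2⟩; exact ⟨h1, by linarith, h2⟩
          rw [this, Real.volume_Ico]
        have hbound := integral_mono_of_nonneg
          (Filter.Eventually.of_forall fun x => norm_nonneg (f x * (g t * k x t)))
          ((((integrableOn_const_iff (C := (1:ℝ))).2 (Or.inr measure_Ioo_lt_top)).indicator
            measurableSet_Ici).const_mul |g t| : Integrable
              (fun x => |g t| * (Ici t).indicator (fun _ => (1:ℝ)) x) M)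
          (Filter.Eventually.of_forall hptb)
        refine le_trans hbound ?_
        rw [MeasureTheory.integral_const_mul, MeasureTheory.integral_indicator measurableSet_Ici]
        rw [Measure.restrict_restrict measurableSet_Ici]
        rw [MeasureTheory.setIntegral_const, measureReal_def, hmeasI]
        rw [smul_eq_mul, mul_one, ENNReal.toReal_ofReal (by linarith [ht.2] : (0:ℝ) ≤ 1 - t)]
        exact hDom2 t ht ht2.le
    -- product integrability
    have hprodint : Integrable (Function.uncurry fun x t => f x * (g t * k x t)) (M.prod M) := by
      refine (integrable_prod_iff' hPaesm).2 ⟨?_, ?_⟩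
      · filter_upwards [ae_restrict_mem measurableSet_Ioo] with t ht
        exact hsection t ht
      · refine Integrable.mono' hDint ?_ ?_
        · exact (hPaesm.norm.prod_swap).integral_prod_right'
        · filter_upwards [ae_restrict_mem measurableSet_Ioo] with t ht
          rw [Real.norm_eq_abs, abs_of_nonneg (integral_nonneg fun x => norm_nonneg _)]
          exact hnormbound t ht
    have hFub := MeasureTheory.integral_integral_swap hprodint
    -- assemble
    calc ∫ x, (∫ t in (1/2:ℝ)..x, g t) * f x ∂M
        = ∫ x, (∫ t, g t * k x t ∂M) * f x ∂M := by
          refine integral_congr_ae ?_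
          filter_upwards [ae_restrict_mem measurableSet_Ioo] with x hx
          rw [hB1 x hx]
    _ = ∫ x, ∫ t, f x * (g t * k x t) ∂M ∂M := by
          refine integral_congr_ae (Filter.Eventually.of_forall fun x => ?_)
          show (∫ t, g t * k x t ∂M) * f x = ∫ t, f x * (g t * k x t) ∂M
          rw [MeasureTheory.integral_const_mul]; ring
    _ = ∫ t, ∫ x, f x * (g t * k x t) ∂M ∂M := hFub
    _ = ∫ t, g t * (-F t) ∂M := by
          refine integral_congr_ae ?_
          filter_upwards [ae_restrict_mem measurableSet_Ioo] with t ht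
          have h1 : ∫ x, f x * (g t * k x t) ∂M = g t * ∫ x, f x * k x t ∂M := by
            rw [← MeasureTheory.integral_const_mul]
            exact integral_congr_ae (Filter.Eventually.of_forall fun x => by ring)
          rw [h1, hB3 t ht]
    _ = -∫ t, g t * F t ∂M := by
          rw [← MeasureTheory.integral_neg]
          exact integral_congr_ae (Filter.Eventually.of_forall fun t => by ring)
  have hfM0 : ∫ x, f x ∂M = 0 := by
    have h1 : ∫ x in Ioc (0:ℝ) 1, f x = 0 := by
      rw [← intervalIntegral.integral_of_le (by norm_num : (0:ℝ) ≤ 1)]; exact hF1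
    rw [hM, ← MeasureTheory.integral_Ioc_eq_integral_Ioo]; exact h1
  have hφfint : Integrable (fun x => φ x * f x) M := by
    refine Integrable.mono' hφint.norm
      (hφint.aestronglyMeasurable.mul hfm.aestronglyMeasurable)
      (Filter.Eventually.of_forall fun x => ?_)
    rw [Real.norm_eq_abs, abs_mul]
    calc |φ x| * |f x| ≤ |φ x| * 1 := mul_le_mul_of_nonneg_left (hfb x) (abs_nonneg _)
    _ = ‖φ x‖ := by rw [mul_one, Real.norm_eq_abs]
  have hi1 : Integrable (fun x => φ (1/2) * f x) M := (hfint.restrict).const_mul _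
  have h_ae : (fun x => φ x * f x) =ᵐ[M]
      fun x => φ (1/2) * f x + (∫ t in (1/2:ℝ)..x, g t) * f x := by
    filter_upwards [ae_restrict_mem measurableSet_Ioo] with x hx
    show φ x * f x = φ (1/2) * f x + (∫ t in (1/2:ℝ)..x, g t) * f x
    rw [hrepr x hx]; ring
  have hi2 : Integrable (fun x => (∫ t in (1/2:ℝ)..x, g t) * f x) M := by
    refine (hφfint.sub hi1).congr ?_
    filter_upwards [ae_restrict_mem measurableSet_Ioo] with x hx
    show φ x * f x - φ (1/2) * f x = (∫ t in (1/2:ℝ)..x, g t) * f x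
    rw [hrepr x hx]; ring
  have hsplit : ∫ x in Ioo (0:ℝ) 1, φ x * f x = -∫ t, g t * F t ∂M := by
    calc ∫ x, φ x * f x ∂M
        = ∫ x, (φ (1/2) * f x + (∫ t in (1/2:ℝ)..x, g t) * f x) ∂M := integral_congr_ae h_ae
    _ = ∫ x, φ (1/2) * f x ∂M + ∫ x, (∫ t in (1/2:ℝ)..x, g t) * f x ∂M :=
          integral_add hi1 hi2
    _ = φ (1/2) * (∫ x, f x ∂M) + ∫ x, (∫ t in (1/2:ℝ)..x, g t) * f x ∂M := by
          rw [MeasureTheory.integral_const_mul]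
    _ = -∫ t, g t * F t ∂M := by rw [hfM0, mul_zero, zero_add, hswap]
  have hsign : 0 ≤ -∫ t, g t * F t ∂M := by
    rw [neg_nonneg]
    by_cases hc : 0 < c ∧ c < 1
    · have hcIoo : c ∈ Ioo (0:ℝ) 1 := ⟨hc.1, hc.2⟩
      set K := g c with hK
      have hKFint : Integrable (fun t => K * F t) M := hFMint.const_mul K
      have hdecomp : (fun t => g t * F t) = fun t => (g t - K) * F t + K * F t := by
        funext t; ring
      have hsubint : Integrable (fun t => (g t - K) * F t) M := by
        have : (fun t => (g t - K) * F t) = fun t => g t * F t - K * F t := by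
          funext t; ring
        rw [this]; exact hgFint.sub hKFint
      rw [hdecomp, integral_add hsubint hKFint, MeasureTheory.integral_const_mul, hvF, mul_zero, add_zero]
      refine integral_nonpos_of_ae ?_
      filter_upwards [ae_restrict_mem measurableSet_Ioo] with t ht
      rcases lt_trichotomy t c with hlt | heq | hgt
      · exact mul_nonpos_of_nonpos_of_nonneg
          (sub_nonpos.2 (hgmono ht hcIoo hlt.le)) (hFpos t hlt)
      · rw [heq, hK]; simp
      · exact mul_nonpos_of_nonneg_of_nonpos
          (sub_nonneg.2 (hgmono hcIoo ht hgt.le)) (hFneg t hgt.le)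
    · have hF0 : F =ᵐ[M] 0 := by
        rcases not_and_or.1 hc with hc0 | hc1
        · push_neg at hc0
          have hnonpos : ∀ᵐ t ∂M, 0 ≤ -F t := by
            filter_upwards [ae_restrict_mem measurableSet_Ioo] with t ht
            simpa using hFneg t (le_trans hc0 ht.1.le)
          have hzero : ∫ t, -F t ∂M = 0 := by rw [MeasureTheory.integral_neg, hvF, neg_zero]
          have := (MeasureTheory.integral_eq_zero_iff_of_nonneg_ae hnonpos hFMint.neg).1 hzero
          filter_upwards [this] with t ht
          simpa using congrArg Neg.neg ht
        · push_neg at hc1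
          have hnonneg : ∀ᵐ t ∂M, 0 ≤ F t := by
            filter_upwards [ae_restrict_mem measurableSet_Ioo] with t ht
            exact hFpos t (lt_of_lt_of_le ht.2 hc1)
          exact (MeasureTheory.integral_eq_zero_iff_of_nonneg_ae hnonneg hFMint).1 hvF
      have : (fun t => g t * F t) =ᵐ[M] 0 := by
        filter_upwards [hF0] with t ht
        simp only [Pi.zero_apply] at ht ⊢
        rw [ht, mul_zero]
      rw [integral_congr_ae this]; simp
  rw [hsplit]; exact hsign

set_option maxHeartbeats 1000000 in
lemma integral_primitive_zero (f : ℝ → ℝ) (hfm : Measurable f) (hfb : ∀ x, |f x| ≤ 1)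
    (hfsupp : ∀ x, x ∉ Ioo (0:ℝ) 1 → f x = 0)
    (hF1 : (∫ s in (0:ℝ)..1, f s) = 0)
    (hmom : (∫ s in (0:ℝ)..1, s * f s) = 0) :
    (∫ t in Ioo (0:ℝ) 1, ∫ s in (0:ℝ)..t, f s) = 0 := by
  set M : Measure ℝ := volume.restrict (Ioo (0:ℝ) 1) with hM
  have hMfin : IsFiniteMeasure M := by
    constructor
    rw [hM, Measure.restrict_apply_univ, Real.volume_Ioo]
    simp
  set e : ℝ → ℝ → ℝ := fun t s => if s ≤ t then 1 else 0 with he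
  have hB1 : ∀ t ∈ Ioo (0:ℝ) 1, (∫ s in (0:ℝ)..t, f s) = ∫ s, f s * e t s ∂M := by
    intro t ht
    have hpt : ∀ s, f s * e t s = (Ioc (0:ℝ) t).indicator f s := by
      intro s
      by_cases hs : s ∈ Ioc (0:ℝ) t
      · rw [indicator_of_mem hs]; simp only [he]
        rw [if_pos hs.2]; ring
      · rw [indicator_of_notMem hs]; simp only [he]
        by_cases hst : s ≤ t
        · rw [if_pos hst]
          have hs0 : s ≤ 0 := by
            by_contra hcon; push_neg at hcon; exact hs ⟨hcon, hst⟩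
          rw [hfsupp s (fun hmem => absurd hmem.1 (not_lt.2 hs0))]; ring
        · rw [if_neg hst]; ring
    have hsub : Ioc (0:ℝ) t ∩ Ioo (0:ℝ) 1 = Ioc (0:ℝ) t :=
      inter_eq_self_of_subset_left (fun z hz => ⟨hz.1, lt_of_le_of_lt hz.2 ht.2⟩)
    have hind : ∫ s, (Ioc (0:ℝ) t).indicator f s ∂M = ∫ s in Ioc (0:ℝ) t, f s := by
      rw [MeasureTheory.integral_indicator measurableSet_Ioc, hM,
        Measure.restrict_restrict measurableSet_Ioc, hsub]
    calc (∫ s in (0:ℝ)..t, f s) = ∫ s in Ioc (0:ℝ) t, f s :=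
          intervalIntegral.integral_of_le ht.1.le
    _ = ∫ s, (Ioc (0:ℝ) t).indicator f s ∂M := hind.symm
    _ = ∫ s, f s * e t s ∂M :=
          integral_congr_ae (Filter.Eventually.of_forall fun s => (hpt s).symm)
  have hemeas : Measurable (fun p : ℝ × ℝ => e p.1 p.2) := by
    have hs1 : MeasurableSet {p : ℝ × ℝ | p.2 ≤ p.1} :=
      measurableSet_le measurable_snd measurable_fst
    exact Measurable.ite hs1 measurable_const measurable_const
  have hprodint : Integrable (Function.uncurry fun t s => f s * e t s) (M.prod M) := by
    have hasm : AEStronglyMeasurable (Function.uncurry fun t s => f s * e t s) (M.prod M) := by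
      have : Function.uncurry (fun t s => f s * e t s) =
          fun p : ℝ × ℝ => f p.2 * e p.1 p.2 := rfl
      rw [this]
      exact ((hfm.comp measurable_snd).mul hemeas).aestronglyMeasurable
    refine Integrable.mono' (integrable_const (1:ℝ)) hasm
      (Filter.Eventually.of_forall fun p => ?_)
    have hub : ‖f p.2 * e p.1 p.2‖ ≤ 1 := by
      rw [Real.norm_eq_abs, abs_mul]
      have hkb : |e p.1 p.2| ≤ 1 := by simp only [he]; split_ifs <;> norm_num
      calc |f p.2| * |e p.1 p.2| ≤ 1 * 1 :=
            mul_le_mul (hfb p.2) hkb (abs_nonneg _) zero_le_one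
      _ = 1 := by ring
    exact hub
  have hB2 : ∀ s ∈ Ioo (0:ℝ) 1, (∫ t, f s * e t s ∂M) = f s * (1 - s) := by
    intro s hs
    have hpt : ∀ t, e t s = (Ici s).indicator (fun _ => (1:ℝ)) t := by
      intro t
      by_cases hst : s ≤ t
      · rw [indicator_of_mem (show t ∈ Ici s from hst)]; simp only [he]; rw [if_pos hst]
      · rw [indicator_of_notMem (show t ∉ Ici s from hst)]; simp only [he]; rw [if_neg hst]
    have hset : Ici s ∩ Ioo (0:ℝ) 1 = Ico s 1 := by
      ext z; constructor
      · rintro ⟨h1, _, h3⟩; exact ⟨h1, h3⟩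
      · rintro ⟨h1, h2⟩; exact ⟨h1, lt_of_lt_of_le hs.1 h1, h2⟩
    have hint : ∫ t, e t s ∂M = 1 - s := by
      calc ∫ t, e t s ∂M = ∫ t, (Ici s).indicator (fun _ => (1:ℝ)) t ∂M :=
            integral_congr_ae (Filter.Eventually.of_forall fun t => hpt t)
      _ = 1 - s := by
            rw [MeasureTheory.integral_indicator_const _ measurableSet_Ici, hM, measureReal_def,
              Measure.restrict_apply measurableSet_Ici, hset, Real.volume_Ico,
              ENNReal.toReal_ofReal (by linarith [hs.2] : (0:ℝ) ≤ 1 - s)]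
            simp
    rw [MeasureTheory.integral_const_mul, hint]
  have hfmul : Integrable (fun s => s * f s) M := by
    refine Integrable.mono' (integrable_const (1:ℝ))
      ((measurable_id.mul hfm).aestronglyMeasurable) ?_
    filter_upwards [ae_restrict_mem measurableSet_Ioo] with s hs
    rw [Real.norm_eq_abs, abs_mul]
    calc |s| * |f s| ≤ 1 * 1 := by
          apply mul_le_mul _ (hfb s) (abs_nonneg _) zero_le_one
          rw [abs_of_nonneg hs.1.le]; exact hs.2.le
    _ = 1 := by ring
  have hfM : Integrable f M := by
    refine Integrable.mono' (integrable_const (1:ℝ)) hfm.aestronglyMeasurable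
      (Filter.Eventually.of_forall fun s => ?_)
    rw [Real.norm_eq_abs]; exact hfb s
  have hintf0 : ∫ s, f s ∂M = 0 := by
    have h1 : ∫ s in Ioc (0:ℝ) 1, f s = 0 := by
      rw [← intervalIntegral.integral_of_le (by norm_num : (0:ℝ) ≤ 1)]; exact hF1
    rw [hM, ← MeasureTheory.integral_Ioc_eq_integral_Ioo]; exact h1
  have hintsf0 : ∫ s, s * f s ∂M = 0 := by
    have h1 : ∫ s in Ioc (0:ℝ) 1, s * f s = 0 := by
      rw [← intervalIntegral.integral_of_le (by norm_num : (0:ℝ) ≤ 1)]; exact hmom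
    rw [hM, ← MeasureTheory.integral_Ioc_eq_integral_Ioo]; exact h1
  calc (∫ t, (∫ s in (0:ℝ)..t, f s) ∂M)
      = ∫ t, (∫ s, f s * e t s ∂M) ∂M := by
        refine integral_congr_ae ?_
        filter_upwards [ae_restrict_mem measurableSet_Ioo] with t ht
        exact hB1 t ht
  _ = ∫ s, (∫ t, f s * e t s ∂M) ∂M := MeasureTheory.integral_integral_swap hprodint
  _ = ∫ s, f s * (1 - s) ∂M := by
        refine integral_congr_ae ?_
        filter_upwards [ae_restrict_mem measurableSet_Ioo] with s hs
        exact hB2 s hs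
  _ = ∫ s, (f s - s * f s) ∂M := by
        refine integral_congr_ae (Filter.Eventually.of_forall fun s => by ring)
  _ = (∫ s, f s ∂M) - ∫ s, s * f s ∂M := integral_sub hfM hfmul
  _ = 0 := by rw [hintf0, hintsf0, sub_zero]


set_option maxHeartbeats 2000000 in
/-- Proposition B.3, admissible target measure on `(0,1)`.
Let `d = 1` and `0 ≤ μ ≤ 1` be supported in `(0,1)`.  Define
`ν = χ_{(0,a)} + χ_{(b,1)}` with `0 ≤ a ≤ b ≤ 1` chosen so that `μ` and `ν` have the
same mass and first moment over `(0,1)`.  Then `μ ≤_SH ν` with respect to `(0,1)`;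
that is, `v(x) = ∫₀ˣ∫₀ʸ (ν − μ)` is nonnegative on `(0,1)` and vanishes outside
`(0,1)`, and `∫ φ dμ ≤ ∫ φ dν` for every convex `φ ∈ L¹((0,1))`.  Moreover `v` is
nondecreasing on `(0,a)` and nonincreasing on `(b,1)`. -/
theorem one_dimensional_target_measure
    (μ : ℝ → ℝ) (hμmeas : Measurable μ)
    (hμ0 : ∀ x, 0 ≤ μ x) (hμ1 : ∀ x, μ x ≤ 1)
    (hμsupp : ∀ x, x ∉ Ioo (0 : ℝ) 1 → μ x = 0)
    (a b : ℝ) (ha : 0 ≤ a) (hab : a ≤ b) (hb : b ≤ 1)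
    (ν : ℝ → ℝ)
    (hν : ν = fun x => if (0 < x ∧ x < a) ∨ (b < x ∧ x < 1) then (1 : ℝ) else 0)
    (hmass : (∫ x in (0 : ℝ)..1, μ x) = ∫ x in (0 : ℝ)..1, ν x)
    (hmoment : (∫ x in (0 : ℝ)..1, x * μ x) = ∫ x in (0 : ℝ)..1, x * ν x) :
    (∀ x ∈ Ioo (0 : ℝ) 1,
        0 ≤ ∫ y in (0 : ℝ)..x, ∫ s in (0 : ℝ)..y, (ν s - μ s)) ∧
    (∀ x, x ∉ Ioo (0 : ℝ) 1 →
        (∫ y in (0 : ℝ)..x, ∫ s in (0 : ℝ)..y, (ν s - μ s)) = 0) ∧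
    (∀ φ : ℝ → ℝ, IntegrableOn φ (Ioo (0 : ℝ) 1) volume →
        ConvexOn ℝ (Ioo (0 : ℝ) 1) φ →
        (∫ x in Ioo (0 : ℝ) 1, φ x * μ x) ≤ ∫ x in Ioo (0 : ℝ) 1, φ x * ν x) ∧
    MonotoneOn (fun x => ∫ y in (0 : ℝ)..x, ∫ s in (0 : ℝ)..y, (ν s - μ s))
      (Ioo (0 : ℝ) a) ∧
    AntitoneOn (fun x => ∫ y in (0 : ℝ)..x, ∫ s in (0 : ℝ)..y, (ν s - μ s))
      (Ioo b 1) := by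
  -- basic facts about ν
  have hνmeas : Measurable ν := by
    rw [hν]
    refine Measurable.ite ?_ measurable_const measurable_const
    have h1 : MeasurableSet {x : ℝ | 0 < x ∧ x < a} := by
      have : {x : ℝ | 0 < x ∧ x < a} = Ioo 0 a := rfl
      rw [this]; exact measurableSet_Ioo
    have h2 : MeasurableSet {x : ℝ | b < x ∧ x < 1} := by
      have : {x : ℝ | b < x ∧ x < 1} = Ioo b 1 := rfl
      rw [this]; exact measurableSet_Ioo
    exact h1.union h2
  have hν0 : ∀ x, 0 ≤ ν x := by
    intro x; rw [hν]; dsimp only; split_ifs <;> norm_num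
  have hν1 : ∀ x, ν x ≤ 1 := by
    intro x; rw [hν]; dsimp only; split_ifs <;> norm_num
  have hνsupp : ∀ x, x ∉ Ioo (0:ℝ) 1 → ν x = 0 := by
    intro x hx; rw [hν]; dsimp only
    rw [if_neg]
    rintro (⟨h1, h2⟩ | ⟨h1, h2⟩)
    · exact hx ⟨h1, lt_of_lt_of_le h2 (hab.trans hb)⟩
    · exact hx ⟨lt_of_le_of_lt (ha.trans hab) h1, h2⟩
  set f : ℝ → ℝ := fun s => ν s - μ s with hfdef
  have hfm : Measurable f := hνmeas.sub hμmeas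
  have hfb : ∀ x, |f x| ≤ 1 := by
    intro x; rw [abs_le]
    constructor
    · simp only [hfdef]; linarith [hν0 x, hμ1 x]
    · simp only [hfdef]; linarith [hν1 x, hμ0 x]
  have hfsupp : ∀ x, x ∉ Ioo (0:ℝ) 1 → f x = 0 := by
    intro x hx; simp only [hfdef]; rw [hμsupp x hx, hνsupp x hx]; ring
  -- sign of f on the pieces
  have hf1 : ∀ s ∈ Ioo (0:ℝ) a, 0 ≤ f s := by
    intro s hs
    have : ν s = 1 := by rw [hν]; exact if_pos (Or.inl ⟨hs.1, hs.2⟩)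
    simp only [hfdef]; rw [this]; linarith [hμ1 s]
  have hf2 : ∀ s, a ≤ s → s ≤ b → f s ≤ 0 := by
    intro s hs1 hs2
    have : ν s = 0 := by
      rw [hν]; refine if_neg ?_
      rintro (⟨h1, h2⟩ | ⟨h1, h2⟩)
      · linarith
      · linarith
    simp only [hfdef]; rw [this]; linarith [hμ0 s]
  have hf3 : ∀ s ∈ Ioo b 1, 0 ≤ f s := by
    intro s hs
    have : ν s = 1 := by rw [hν]; exact if_pos (Or.inr ⟨hs.1, hs.2⟩)
    simp only [hfdef]; rw [this]; linarith [hμ1 s]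
  -- integrability
  have hfint : Integrable f volume := by
    have hind : Integrable ((Ioo (0:ℝ) 1).indicator (fun _ => (1:ℝ))) volume :=
      (integrable_indicator_iff measurableSet_Ioo).2
        ((integrableOn_const_iff (C := (1:ℝ))).2 (Or.inr measure_Ioo_lt_top))
    refine Integrable.mono' hind hfm.aestronglyMeasurable
      (Filter.Eventually.of_forall fun x => ?_)
    by_cases hx : x ∈ Ioo (0:ℝ) 1
    · rw [indicator_of_mem hx]; simpa using hfb x
    · rw [indicator_of_notMem hx, hfsupp x hx]; simp
  -- interval integrability of μ, ν, x*μ, x*ν on [0,1]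
  have hμb : ∀ x, |μ x| ≤ 1 := fun x => by rw [abs_of_nonneg (hμ0 x)]; exact hμ1 x
  have hνb : ∀ x, |ν x| ≤ 1 := fun x => by rw [abs_of_nonneg (hν0 x)]; exact hν1 x
  have hii : ∀ (g : ℝ → ℝ), Measurable g → (∀ x, |g x| ≤ 1) →
      IntervalIntegrable g volume 0 1 := by
    intro g hgm hgb
    rw [intervalIntegrable_iff]
    refine Integrable.mono' ((integrableOn_const_iff (C := (1:ℝ))).2 ?_)
      hgm.aestronglyMeasurable (Filter.Eventually.of_forall fun x => ?_)
    · right; rw [uIoc_of_le (by norm_num : (0:ℝ) ≤ 1)]; exact measure_Ioc_lt_top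
    · rw [Real.norm_eq_abs]; exact hgb x
  -- F and its basic values
  have hF1 : (∫ s in (0:ℝ)..1, f s) = 0 := by
    have : (∫ s in (0:ℝ)..1, f s) =
        (∫ s in (0:ℝ)..1, ν s) - ∫ s in (0:ℝ)..1, μ s :=
      intervalIntegral.integral_sub (hii ν hνmeas hνb) (hii μ hμmeas hμb)
    rw [this, ← hmass, sub_self]
  have hmomf : (∫ s in (0:ℝ)..1, s * f s) = 0 := by
    have hiν : IntervalIntegrable (fun s => s * ν s) volume 0 1 := by
      rw [intervalIntegrable_iff]
      refine Integrable.mono' ((integrableOn_const_iff (C := (1:ℝ))).2 ?_)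
        ((measurable_id.mul hνmeas).aestronglyMeasurable)
        ?_
      · right; rw [uIoc_of_le (by norm_num : (0:ℝ) ≤ 1)]; exact measure_Ioc_lt_top
      · rw [uIoc_of_le (by norm_num : (0:ℝ) ≤ 1)]
        filter_upwards [ae_restrict_mem measurableSet_Ioc] with s hs
        rw [Real.norm_eq_abs, abs_mul]
        calc |s| * |ν s| ≤ 1 * 1 := by
              apply mul_le_mul _ (hνb s) (abs_nonneg _) zero_le_one
              rw [abs_of_nonneg hs.1.le]; exact hs.2
        _ = 1 := by ring
    have hiμ : IntervalIntegrable (fun s => s * μ s) volume 0 1 := by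
      rw [intervalIntegrable_iff]
      refine Integrable.mono' ((integrableOn_const_iff (C := (1:ℝ))).2 ?_)
        ((measurable_id.mul hμmeas).aestronglyMeasurable)
        ?_
      · right; rw [uIoc_of_le (by norm_num : (0:ℝ) ≤ 1)]; exact measure_Ioc_lt_top
      · rw [uIoc_of_le (by norm_num : (0:ℝ) ≤ 1)]
        filter_upwards [ae_restrict_mem measurableSet_Ioc] with s hs
        rw [Real.norm_eq_abs, abs_mul]
        calc |s| * |μ s| ≤ 1 * 1 := by
              apply mul_le_mul _ (hμb s) (abs_nonneg _) zero_le_one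
              rw [abs_of_nonneg hs.1.le]; exact hs.2
        _ = 1 := by ring
    have heq : (fun s => s * f s) = fun s => s * ν s - s * μ s := by
      funext s; simp only [hfdef]; ring
    rw [heq, intervalIntegral.integral_sub hiν hiμ, ← hmoment, sub_self]
  set F : ℝ → ℝ := fun y => ∫ s in (0:ℝ)..y, f s with hFdef
  have hFcont : Continuous F :=
    intervalIntegral.continuous_primitive (fun _ _ => hfint.intervalIntegrable) 0
  have hFsub : ∀ u w : ℝ, F w - F u = ∫ s in u..w, f s := fun u w =>
    intervalIntegral.integral_interval_sub_left hfint.intervalIntegrable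
      hfint.intervalIntegrable
  have hF0 : ∀ t, t ≤ 0 → F t = 0 := by
    intro t ht
    have : F t = -∫ s in t..(0:ℝ), f s := by
      have h := hFsub 0 t
      simp only [intervalIntegral.integral_symm t 0] at h ⊢
      have hF00 : F 0 = 0 := intervalIntegral.integral_same
      linarith [h, hF00]
    rw [this, intervalIntegral.integral_congr
      (g := fun _ => (0:ℝ)) ?_, intervalIntegral.integral_zero, neg_zero]
    intro s hs
    rw [uIcc_of_le ht] at hs
    exact hfsupp s (fun hmem => absurd (lt_of_lt_of_le hmem.1 hs.2) (lt_irrefl 0))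
  have hFone : F 1 = 0 := hF1
  have hFge1 : ∀ t, 1 ≤ t → F t = 0 := by
    intro t ht
    have h := hFsub 1 t
    have hz : (∫ s in (1:ℝ)..t, f s) = 0 := by
      rw [intervalIntegral.integral_congr (g := fun _ => (0:ℝ)) ?_,
        intervalIntegral.integral_zero]
      intro s hs
      rw [uIcc_of_le ht] at hs
      exact hfsupp s (fun hmem => absurd (lt_of_lt_of_le (lt_of_le_of_lt hs.1 hmem.2) (le_refl 1)) (by simp))
    rw [hFone] at h; linarith
  -- sign structure of F
  have hFle_a : ∀ t, t ≤ a → 0 ≤ F t := by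
    intro t ht
    rcases le_or_gt t 0 with h0 | h0
    · rw [hF0 t h0]
    · have : F t = ∫ s in Ioo (0:ℝ) t, f s := by
        rw [← MeasureTheory.integral_Ioc_eq_integral_Ioo,
          ← intervalIntegral.integral_of_le h0.le]
      rw [this]
      refine setIntegral_nonneg measurableSet_Ioo fun s hs => ?_
      exact hf1 s ⟨hs.1, lt_of_lt_of_le hs.2 ht⟩
  have hFanti : ∀ u w, a ≤ u → u ≤ w → w ≤ b → F w ≤ F u := by
    intro u w h1 h2 h3
    have hsub2 : F w - F u = ∫ s in Ioo u w, f s := by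
      rw [hFsub u w, intervalIntegral.integral_of_le h2,
        MeasureTheory.integral_Ioc_eq_integral_Ioo]
    have : (∫ s in Ioo u w, f s) ≤ 0 := by
      refine setIntegral_nonpos measurableSet_Ioo fun s hs => ?_
      exact hf2 s (le_of_lt (lt_of_le_of_lt h1 hs.1)) (le_of_lt (lt_of_lt_of_le hs.2 h3))
    linarith [hsub2, this]
  have hFb_le : ∀ t, b ≤ t → F t ≤ 0 := by
    intro t ht
    rcases le_or_gt 1 t with h1 | h1
    · rw [hFge1 t h1]
    · have hsub2 : F 1 - F t = ∫ s in Ioo t 1, f s := by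
        rw [hFsub t 1, intervalIntegral.integral_of_le h1.le,
          MeasureTheory.integral_Ioc_eq_integral_Ioo]
      have : (0:ℝ) ≤ ∫ s in Ioo t 1, f s := by
        refine setIntegral_nonneg measurableSet_Ioo fun s hs => ?_
        exact hf3 s ⟨lt_of_le_of_lt ht hs.1, hs.2⟩
      rw [hFone] at hsub2; linarith
  -- the sign-change point c
  obtain ⟨c, hca, hcb, hFpos, hFneg⟩ :
      ∃ c, a ≤ c ∧ c ≤ b ∧ (∀ t, t < c → 0 ≤ F t) ∧ (∀ t, c ≤ t → F t ≤ 0) := by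
    by_cases hFb0 : 0 ≤ F b
    · refine ⟨b, hab, le_refl b, fun t htb => ?_, fun t htb => hFb_le t htb⟩
      rcases le_or_gt t a with hta | hta
      · exact hFle_a t hta
      · exact le_trans hFb0 (hFanti t b hta.le htb.le (le_refl b))
    · push_neg at hFb0
      set T : Set ℝ := Icc a b ∩ {x | F x ≤ 0} with hT
      have hTclosed : IsClosed T :=
        isClosed_Icc.inter (isClosed_le hFcont continuous_const)
      have hTne : T.Nonempty := ⟨b, ⟨hab, le_refl b⟩, hFb0.le⟩
      have hTbdd : BddBelow T := ⟨a, fun z hz => hz.1.1⟩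
      have hcmem : sInf T ∈ T := hTclosed.csInf_mem hTne hTbdd
      refine ⟨sInf T, hcmem.1.1, hcmem.1.2, ?_, ?_⟩
      · intro t htc
        rcases le_or_gt t a with hta | hta
        · exact hFle_a t hta
        · by_contra hcon; push_neg at hcon
          have htT : t ∈ T := ⟨⟨hta.le, le_trans htc.le hcmem.1.2⟩, hcon.le⟩
          exact absurd (csInf_le hTbdd htT) (not_le.2 htc)
      · intro t htc
        rcases le_or_gt b t with hbt | hbt
        · exact hFb_le t hbt
        · exact le_trans (hFanti (sInf T) t hcmem.1.1 htc hbt.le) hcmem.2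
  have hc0 : 0 ≤ c := le_trans ha hca
  have hc1 : c ≤ 1 := le_trans hcb hb
  -- v(1) = 0 via Fubini
  have hIooF : (∫ t in Ioo (0:ℝ) 1, ∫ s in (0:ℝ)..t, f s) = 0 :=
    integral_primitive_zero f hfm hfb hfsupp hF1 hmomf
  -- v and its values; note (fun y => ∫ s in 0..y, f s) = F
  have hvint : ∀ u w : ℝ, IntervalIntegrable F volume u w :=
    fun u w => hFcont.intervalIntegrable u w
  have hv0 : ∀ x, x ≤ 0 → (∫ y in (0:ℝ)..x, F y) = 0 := by
    intro x hx
    rw [intervalIntegral.integral_symm, intervalIntegral.integral_congr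
      (g := fun _ => (0:ℝ)) ?_, intervalIntegral.integral_zero, neg_zero]
    intro s hs
    rw [uIcc_of_le hx] at hs
    exact hF0 s hs.2
  have hv1 : (∫ y in (0:ℝ)..1, F y) = 0 := by
    rw [intervalIntegral.integral_of_le (by norm_num : (0:ℝ) ≤ 1),
      MeasureTheory.integral_Ioc_eq_integral_Ioo]
    exact hIooF
  have hvge1 : ∀ x, 1 ≤ x → (∫ y in (0:ℝ)..x, F y) = 0 := by
    intro x hx
    have h := intervalIntegral.integral_interval_sub_left (hvint 0 x) (hvint 0 1)
    have hz : (∫ y in (1:ℝ)..x, F y) = 0 := by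
      rw [intervalIntegral.integral_congr (g := fun _ => (0:ℝ)) ?_,
        intervalIntegral.integral_zero]
      intro s hs
      rw [uIcc_of_le hx] at hs
      exact hFge1 s hs.1
    rw [hz, hv1] at h; linarith
  -- nonnegativity of v on (0,1)
  have hvnonneg : ∀ x ∈ Ioo (0:ℝ) 1, 0 ≤ ∫ y in (0:ℝ)..x, F y := by
    intro x hx
    rcases le_or_gt x c with hxc | hxc
    · rw [intervalIntegral.integral_of_le hx.1.le,
        MeasureTheory.integral_Ioc_eq_integral_Ioo]
      refine setIntegral_nonneg measurableSet_Ioo fun t ht => ?_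
      exact hFpos t (lt_of_lt_of_le ht.2 hxc)
    · have h := intervalIntegral.integral_interval_sub_left (hvint 0 1) (hvint 0 x)
      rw [hv1] at h
      have hz : (0:ℝ) ≤ -∫ y in x..(1:ℝ), F y := by
        rw [intervalIntegral.integral_of_le hx.2.le,
          MeasureTheory.integral_Ioc_eq_integral_Ioo, neg_nonneg]
        refine setIntegral_nonpos measurableSet_Ioo fun t ht => ?_
        exact hFneg t (le_of_lt (lt_trans hxc ht.1))
      linarith
  refine ⟨hvnonneg, ?_, ?_, ?_, ?_⟩
  · -- vanishing outside (0,1)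
    intro x hx
    rcases le_or_gt x 0 with h0 | h0
    · exact hv0 x h0
    · have h1 : 1 ≤ x := by
        by_contra hcon; push_neg at hcon; exact hx ⟨h0, hcon⟩
      exact hvge1 x h1
  · -- convex order
    intro φ hφint hφconv
    have key := convex_part f hfm hfb hfsupp c hFpos hFneg hF1 hIooF φ hφint hφconv
    have hμφ : Integrable (fun x => φ x * μ x) (volume.restrict (Ioo (0:ℝ) 1)) := by
      refine Integrable.mono' hφint.norm
        (hφint.aestronglyMeasurable.mul hμmeas.aestronglyMeasurable)
        (Filter.Eventually.of_forall fun x => ?_)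
      rw [Real.norm_eq_abs, abs_mul]
      calc |φ x| * |μ x| ≤ |φ x| * 1 := mul_le_mul_of_nonneg_left (hμb x) (abs_nonneg _)
      _ = ‖φ x‖ := by rw [mul_one, Real.norm_eq_abs]
    have hνφ : Integrable (fun x => φ x * ν x) (volume.restrict (Ioo (0:ℝ) 1)) := by
      refine Integrable.mono' hφint.norm
        (hφint.aestronglyMeasurable.mul hνmeas.aestronglyMeasurable)
        (Filter.Eventually.of_forall fun x => ?_)
      rw [Real.norm_eq_abs, abs_mul]
      calc |φ x| * |ν x| ≤ |φ x| * 1 := mul_le_mul_of_nonneg_left (hνb x) (abs_nonneg _)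
      _ = ‖φ x‖ := by rw [mul_one, Real.norm_eq_abs]
    have hdiff : (∫ x in Ioo (0:ℝ) 1, φ x * ν x) - (∫ x in Ioo (0:ℝ) 1, φ x * μ x)
        = ∫ x in Ioo (0:ℝ) 1, φ x * f x := by
      rw [← integral_sub hνφ hμφ]
      refine integral_congr_ae (Filter.Eventually.of_forall fun x => ?_)
      show φ x * ν x - φ x * μ x = φ x * f x
      simp only [hfdef]; ring
    linarith [key, hdiff]
  · -- monotone on (0,a)
    intro x1 h1 x2 h2 hle
    have h := intervalIntegral.integral_interval_sub_left (hvint 0 x2) (hvint 0 x1)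
    have hz : (0:ℝ) ≤ ∫ y in x1..x2, F y := by
      rw [intervalIntegral.integral_of_le hle,
        MeasureTheory.integral_Ioc_eq_integral_Ioo]
      refine setIntegral_nonneg measurableSet_Ioo fun t ht => ?_
      exact hFle_a t (le_of_lt (lt_of_lt_of_le ht.2 (le_of_lt h2.2)))
    show (∫ y in (0:ℝ)..x1, F y) ≤ ∫ y in (0:ℝ)..x2, F y
    linarith
  · -- antitone on (b,1)
    intro x1 h1 x2 h2 hle
    have h := intervalIntegral.integral_interval_sub_left (hvint 0 x2) (hvint 0 x1)
    have hz : (∫ y in x1..x2, F y) ≤ 0 := by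
      rw [intervalIntegral.integral_of_le hle,
        MeasureTheory.integral_Ioc_eq_integral_Ioo]
      refine setIntegral_nonpos measurableSet_Ioo fun t ht => ?_
      exact hFb_le t (le_of_lt (lt_of_le_of_lt (le_of_lt h1.1) ht.1))
    show (∫ y in (0:ℝ)..x2, F y) ≤ ∫ y in (0:ℝ)..x1, F y
    linarith
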